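/- arXiv:1906.07746 — 2 statements merged into one kernel-verified Lean document; each statement's English description precedes it below -/
import Mathlib

section
/- Let R be a Root barrier, i.e. a closed subset of [0,∞]×[-∞,∞] such that (t,x)∈R implies (s,x)∈R for all s≥t, (+∞,x)∈R for all x, and [0,∞]×{-∞,+∞}⊆R. Then the barrier function r(x) = inf{t ≥ 0 : (t,x) ∈ R} is lower semi-continuous on [-∞,+∞]. -/
open ENNReal

/-- A Root barrier: a closed subset of `[0,∞] × [-∞,∞]` which is right-closed in time,
contains the line at `t = ∞`, and contains the horizontal lines at `x = ±∞`. -/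
structure IsRootBarrier (R : Set (ℝ≥0∞ × EReal)) : Prop where
  closed : IsClosed R
  time_mono : ∀ t x, (t, x) ∈ R → ∀ s, t ≤ s → (s, x) ∈ R
  top_mem : ∀ x : EReal, ((⊤ : ℝ≥0∞), x) ∈ R
  infty_mem : ∀ t : ℝ≥0∞, (t, (⊥ : EReal)) ∈ R ∧ (t, (⊤ : EReal)) ∈ R

open Set

section SliceInf

variable {α β : Type*} [CompleteLinearOrder α] [TopologicalSpace α] [OrderTopology α]
  [TopologicalSpace β]

theorem IsClosed.sInf_le_iff_mem_of_isUpperSet {S : Set α} (hS : IsClosed S) (hup : IsUpperSet S)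
    (hne : S.Nonempty) {c : α} : sInf S ≤ c ↔ c ∈ S :=
  ⟨fun h => hup h (hS.sInf_mem hne), fun h => sInf_le h⟩

theorem lowerSemicontinuous_sInf_of_isClosed_of_isUpperSet {R : Set (α × β)} (hR : IsClosed R)
    (hup : ∀ y, IsUpperSet {t | (t, y) ∈ R}) (hne : ∀ y, ∃ t, (t, y) ∈ R) :
    LowerSemicontinuous (fun y : β => sInf {t | (t, y) ∈ R}) := by
  rw [lowerSemicontinuous_iff_isClosed_preimage]
  intro c
  have hsublevel : (fun y : β => sInf {t | (t, y) ∈ R}) ⁻¹' Iic c = {y | (c, y) ∈ R} :=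
    ext fun y => (hR.preimage (Continuous.prodMk_left y)).sInf_le_iff_mem_of_isUpperSet
      (hup y) (hne y)
  rw [hsublevel]
  exact hR.preimage (Continuous.prodMk_right c)

end SliceInf

theorem root_barrier_function_lowerSemicontinuous
    (R : Set (ℝ≥0∞ × EReal)) (hR : IsRootBarrier R) :
    LowerSemicontinuous (fun x : EReal => sInf {t : ℝ≥0∞ | (t, x) ∈ R}) :=
  lowerSemicontinuous_sInf_of_isClosed_of_isUpperSet hR.closed
    (fun x _ _ hst ht => hR.time_mono _ x ht _ hst) (fun x => ⟨⊤, hR.top_mem x⟩)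
end

section
/- Let r₁ : ℝ → [0,+∞] be nonnegative, and for each λ > 0 and x ∈ ℝ set r_λ(x) = λ·r₁(x/√λ). Then the map λ ↦ r_λ(x) is non-decreasing on (0,∞) for every x ∈ ℝ if and only if x ↦ r₁(x)/x² is non-decreasing on (-∞,0) and non-increasing on (0,+∞). -/
/-!
With `r_λ(x) = rescale r₁ λ x` and `q(y) = quadRatio r₁ y = r₁(y) / y²`, one has
`r_λ(x) = x² · q(x / √λ)` for `x ≠ 0`. As `λ` increases, `x / √λ` decreases through `(0, ∞)`
when `x > 0` and increases through `(-∞, 0)` when `x < 0`, so the monotonicity of `q` transfers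
to `λ ↦ r_λ(x)`. Conversely `q(y) = r_λ(±1)` for `λ = 1 / y²`, the sign being that of `y`, and
`y ↦ 1 / y²` reverses order on `(0, ∞)` and preserves it on `(-∞, 0)`.
-/

open ENNReal Set

noncomputable section

def rescale (r : ℝ → ℝ≥0∞) (lam x : ℝ) : ℝ≥0∞ :=
  ENNReal.ofReal lam * r (x / Real.sqrt lam)

def quadRatio (r : ℝ → ℝ≥0∞) (y : ℝ) : ℝ≥0∞ :=
  r y / ENNReal.ofReal (y ^ 2)

end

section

variable {x y : ℝ}

lemma div_sqrt_sq_div (h : 0 < x * y) : x / Real.sqrt ((x / y) ^ 2) = y := by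
  have hxy : 0 < x / y := by
    rcases mul_pos_iff.mp h with ⟨hx, hy⟩ | ⟨hx, hy⟩
    · exact div_pos hx hy
    · exact div_pos_of_neg_of_neg hx hy
  rw [Real.sqrt_sq hxy.le, div_div_cancel₀ (left_ne_zero_of_mul h.ne')]

lemma sq_div_sq_div_sqrt (hx : x ≠ 0) {lam : ℝ} (hlam : 0 < lam) :
    x ^ 2 / (x / Real.sqrt lam) ^ 2 = lam := by
  rw [div_pow, Real.sq_sqrt hlam.le]
  field_simp

lemma antitoneOn_div_sqrt (hx : 0 ≤ x) : AntitoneOn (fun lam => x / Real.sqrt lam) (Ioi 0) :=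
  fun _ ha _ _ hab => div_le_div_of_nonneg_left hx (Real.sqrt_pos.mpr ha) (Real.sqrt_le_sqrt hab)

lemma monotoneOn_div_sqrt (hx : x ≤ 0) : MonotoneOn (fun lam => x / Real.sqrt lam) (Ioi 0) :=
  (antitoneOn_div_sqrt (neg_nonneg.mpr hx)).neg.congr fun _ _ => by simp only [neg_div, neg_neg]

lemma antitoneOn_one_div_sq : AntitoneOn (fun y : ℝ => (1 / y) ^ 2) (Ioi 0) :=
  fun a ha b hb hab => by
    have ha : 0 < a := ha
    have hb : 0 < b := hb
    dsimp only
    gcongr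

lemma monotoneOn_one_div_sq : MonotoneOn (fun y : ℝ => (1 / y) ^ 2) (Iio 0) :=
  fun a ha b hb hab => by
    have ha : a < 0 := ha
    have hb : b < 0 := hb
    simp only [one_div, inv_pow]
    exact inv_anti₀ (by nlinarith) (by nlinarith)

variable (r : ℝ → ℝ≥0∞)

lemma rescale_eq_mul_quadRatio (hx : x ≠ 0) {lam : ℝ} (hlam : 0 < lam) :
    rescale r lam x = ENNReal.ofReal (x ^ 2) * quadRatio r (x / Real.sqrt lam) := by
  have hy : 0 < (x / Real.sqrt lam) ^ 2 := by
    have := Real.sqrt_pos.mpr hlam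
    positivity
  rw [rescale, quadRatio, ENNReal.div_eq_inv_mul, ← ENNReal.ofReal_inv_of_pos hy, ← mul_assoc,
    ← ENNReal.ofReal_mul (sq_nonneg x), ← div_eq_mul_inv, sq_div_sq_div_sqrt hx hlam]

lemma rescale_sq_div (h : 0 < x * y) :
    rescale r ((x / y) ^ 2) x = ENNReal.ofReal (x ^ 2) * quadRatio r y := by
  have hx : x ≠ 0 := left_ne_zero_of_mul h.ne'
  have hy : y ≠ 0 := right_ne_zero_of_mul h.ne'
  rw [rescale_eq_mul_quadRatio r hx (by positivity), div_sqrt_sq_div h]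

lemma quadRatio_eq_rescale_one (hy : 0 < y) : quadRatio r y = rescale r ((1 / y) ^ 2) 1 := by
  rw [rescale_sq_div r (by rwa [one_mul]), one_pow, ENNReal.ofReal_one, one_mul]

lemma quadRatio_eq_rescale_neg_one (hy : y < 0) :
    quadRatio r y = rescale r ((1 / y) ^ 2) (-1) := by
  rw [← neg_sq, ← neg_div, rescale_sq_div r (by linarith), neg_one_sq, ENNReal.ofReal_one,
    one_mul]

lemma antitoneOn_quadRatio (h : MonotoneOn (rescale r · 1) (Ioi 0)) :
    AntitoneOn (quadRatio r) (Ioi 0) :=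
  (h.comp_AntitoneOn antitoneOn_one_div_sq
      fun _ hy => mem_Ioi.mpr (pow_pos (one_div_pos.mpr hy) 2)).congr
    fun _ hy => (quadRatio_eq_rescale_one r hy).symm

lemma monotoneOn_quadRatio (h : MonotoneOn (rescale r · (-1)) (Ioi 0)) :
    MonotoneOn (quadRatio r) (Iio 0) :=
  (h.comp monotoneOn_one_div_sq
      fun _ hy => mem_Ioi.mpr (sq_pos_of_neg (one_div_neg.mpr hy))).congr
    fun _ hy => (quadRatio_eq_rescale_neg_one r hy).symm

lemma monotoneOn_rescale (hneg : MonotoneOn (quadRatio r) (Iio 0))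
    (hpos : AntitoneOn (quadRatio r) (Ioi 0)) (x : ℝ) :
    MonotoneOn (rescale r · x) (Ioi 0) := by
  rcases lt_trichotomy x 0 with hx | rfl | hx
  · refine ((hneg.comp (monotoneOn_div_sqrt hx.le) ?_).const_mul' _).congr
      fun lam hlam => (rescale_eq_mul_quadRatio r hx.ne hlam).symm
    exact fun lam hlam => div_neg_of_neg_of_pos hx (Real.sqrt_pos.mpr hlam)
  · intro a _ b _ hab
    simpa only [rescale, zero_div] using mul_le_mul_left (ENNReal.ofReal_le_ofReal hab) (r 0)
  · refine ((hpos.comp (antitoneOn_div_sqrt hx.le) ?_).const_mul' _).congr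
      fun lam hlam => (rescale_eq_mul_quadRatio r hx.ne' hlam).symm
    exact fun lam hlam => div_pos hx (Real.sqrt_pos.mpr hlam)

end

/-- For `r_λ(x) = λ·r₁(x/√λ)`, the map `λ ↦ r_λ(x)` is non-decreasing on `(0,∞)` for
every `x` iff `x ↦ r₁(x)/x²` is non-decreasing on `(-∞,0)` and non-increasing on `(0,∞)`. -/
theorem root_barrier_scaling_monotone_iff (r₁ : ℝ → ℝ≥0∞) :
    (∀ x : ℝ, MonotoneOn
        (fun lam : ℝ => ENNReal.ofReal lam * r₁ (x / Real.sqrt lam)) (Set.Ioi 0)) ↔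
      (MonotoneOn (fun x : ℝ => r₁ x / ENNReal.ofReal (x ^ 2)) (Set.Iio 0) ∧
        AntitoneOn (fun x : ℝ => r₁ x / ENNReal.ofReal (x ^ 2)) (Set.Ioi 0)) :=
  ⟨fun h => ⟨monotoneOn_quadRatio r₁ (h (-1)), antitoneOn_quadRatio r₁ (h 1)⟩,
    fun ⟨hneg, hpos⟩ => monotoneOn_rescale r₁ hneg hpos⟩
end
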